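/- Let I ⊆ ℝ be an open interval and γ : I → ℝⁿ a three times continuously differentiable curve with γ'(t) ≠ 0 for all t ∈ I, where ℝⁿ carries the Euclidean inner product ⟨·,·⟩ with norm |·|. Then the following are equivalent: (i) there exists a continuously differentiable α : I → ℝⁿ such that γ'' + 2⟨α,γ'⟩γ' − |γ'|²α = 0 and α' − ⟨α,γ'⟩α + (1/2)|α|²γ' = 0 hold on I; (ii) γ''' − (3⟨γ',γ''⟩/|γ'|²)·γ'' + (3|γ''|²/(2|γ'|²))·γ' = 0 holds on I. -/

import Mathlib

/-!
Pairing the first equation with `γ'` gives `⟪α, γ'⟫ = -⟪γ', γ''⟫ / ‖γ'‖²`, after which the first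
equation says that `α` is the derivative of the inverted velocity `γ' / ‖γ'‖²`. Substituting this
`α` into the second equation turns its left side into `‖γ'‖⁻²` times the reflection in `γ'ᗮ` of the
third-order expression, and a nonzero multiple of a reflection is injective.
-/

open scoped RealInnerProductSpace

section
variable {E : Type*} [NormedAddCommGroup E] [InnerProductSpace ℝ E]

/-- The differential of the inversion `x ↦ x / ‖x‖²` at `v`, applied to `a`: `‖v‖⁻²` times the
reflection of `a` in `vᗮ`. -/
noncomputable def inversionDeriv (v a : E) : E :=
  (‖v‖ ^ 2)⁻¹ • (a - (2 * ⟪v, a⟫ / ‖v‖ ^ 2) • v)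

noncomputable def conformalJerk (v a j : E) : E :=
  j - (3 * ⟪v, a⟫ / ‖v‖ ^ 2) • a + (3 * ‖a‖ ^ 2 / (2 * ‖v‖ ^ 2)) • v

theorem inner_inversionDeriv_self (v a : E) :
    ⟪inversionDeriv v a, v⟫ = -(⟪v, a⟫ / ‖v‖ ^ 2) := by
  rcases eq_or_ne v 0 with rfl | hv
  · simp
  have hs : ‖v‖ ^ 2 ≠ 0 := by positivity
  simp only [inversionDeriv, inner_sub_left, real_inner_smul_left, real_inner_self_eq_norm_sq,
    real_inner_comm v a]
  field_simp
  ring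

theorem norm_inversionDeriv_sq (v a : E) :
    ‖inversionDeriv v a‖ ^ 2 = ‖a‖ ^ 2 / ‖v‖ ^ 4 := by
  rcases eq_or_ne v 0 with rfl | hv
  · simp [inversionDeriv]
  have hs : ‖v‖ ≠ 0 := by positivity
  rw [← real_inner_self_eq_norm_sq]
  simp only [inversionDeriv, inner_sub_left, inner_sub_right, real_inner_smul_left,
    real_inner_smul_right, real_inner_comm v a]
  simp only [real_inner_self_eq_norm_sq]
  field_simp
  ring

theorem eq_inversionDeriv_iff {v a α : E} (hv : v ≠ 0) :
    α = inversionDeriv v a ↔ a + (2 * ⟪α, v⟫) • v - ‖v‖ ^ 2 • α = 0 := by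
  have hs : ‖v‖ ≠ 0 := by positivity
  refine ⟨?_, fun h => ?_⟩
  · rintro rfl
    rw [inner_inversionDeriv_self, inversionDeriv]
    match_scalars <;> field_simp <;> ring
  · have hαv : ⟪α, v⟫ = -(⟪v, a⟫ / ‖v‖ ^ 2) := by
      have h0 := congrArg (⟪·, v⟫) h
      simp only [inner_add_left, inner_sub_left, real_inner_smul_left,
        real_inner_self_eq_norm_sq, inner_zero_left, real_inner_comm v a] at h0
      field_simp
      linear_combination h0
    apply smul_right_injective E (pow_ne_zero 2 hs)
    rw [hαv] at h
    linear_combination (norm := skip) -h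
    rw [inversionDeriv]
    match_scalars <;> field_simp <;> ring

@[simp]
theorem inversionDeriv_zero_right (v : E) : inversionDeriv v 0 = 0 := by
  simp [inversionDeriv]

theorem inversionDeriv_eq_zero_iff {v a : E} (hv : v ≠ 0) :
    inversionDeriv v a = 0 ↔ a = 0 := by
  refine ⟨fun h => ?_, fun h => h ▸ inversionDeriv_zero_right v⟩
  have hs : ‖v‖ ≠ 0 := by positivity
  have h2 := norm_inversionDeriv_sq v a
  rw [h] at h2
  simpa [eq_comm, hs] using h2

theorem hasDerivAt_inversionDeriv {v a : ℝ → E} {j : E} {t : ℝ} (hv : HasDerivAt v (a t) t)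
    (ha : HasDerivAt a j t) (h0 : v t ≠ 0) :
    HasDerivAt (fun s => inversionDeriv (v s) (a s))
      (⟪inversionDeriv (v t) (a t), v t⟫ • inversionDeriv (v t) (a t)
        - ((1 / 2) * ‖inversionDeriv (v t) (a t)‖ ^ 2) • v t
        + inversionDeriv (v t) (conformalJerk (v t) (a t) j)) t := by
  have hs : ‖v t‖ ≠ 0 := by positivity
  have hN := hv.norm_sq
  have hNinv := hN.inv (pow_ne_zero 2 hs)
  have hc := hv.inner ℝ ha
  have hD := hNinv.smul (ha.sub ((((hasDerivAt_const t (2 : ℝ)).mul hc).div hN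
    (pow_ne_zero 2 hs)).smul hv))
  refine (hD : HasDerivAt (fun s => inversionDeriv (v s) (a s)) _ t).congr_deriv ?_
  rw [inner_inversionDeriv_self, norm_inversionDeriv_sq]
  simp only [inversionDeriv, conformalJerk, inner_sub_right, inner_add_right,
    real_inner_smul_right, real_inner_self_eq_norm_sq, Pi.inv_apply, Pi.mul_apply, Pi.div_apply,
    Pi.sub_apply, Pi.smul_apply']
  match_scalars <;> field_simp <;> ring

theorem ContDiffOn.inversionDeriv {n : WithTop ℕ∞} {s : Set ℝ} {v a : ℝ → E}
    (hv : ContDiffOn ℝ n v s) (ha : ContDiffOn ℝ n a s) (h0 : ∀ t ∈ s, v t ≠ 0) :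
    ContDiffOn ℝ n (fun t => _root_.inversionDeriv (v t) (a t)) s := by
  have hN : ∀ t ∈ s, ‖v t‖ ^ 2 ≠ 0 := fun t ht => by simpa using h0 t ht
  have hNinv := hv.norm_sq ℝ |>.inv hN
  exact hNinv.smul
    (ha.sub ((contDiffOn_const.mul (hv.inner ℝ ha)).div (hv.norm_sq ℝ) hN |>.smul hv))

end

/-- For a `C³` curve `γ` in Euclidean `ℝⁿ` with nowhere vanishing velocity, the
existence of a `C¹` one-form `α` satisfying the two conformal geodesic equations (with
vanishing Schouten tensor) is equivalent to the third-order conformal geodesic ODE. -/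
theorem conformal_geodesic_system_iff_third_order_ode (n : ℕ) (p q : ℝ)
    (γ : ℝ → EuclideanSpace ℝ (Fin n))
    (hγ : ContDiffOn ℝ 3 γ (Set.Ioo p q))
    (hne : ∀ t ∈ Set.Ioo p q, deriv γ t ≠ 0) :
    (∃ α : ℝ → EuclideanSpace ℝ (Fin n), ContDiffOn ℝ 1 α (Set.Ioo p q) ∧
      ∀ t ∈ Set.Ioo p q,
        deriv (deriv γ) t + (2 * ⟪α t, deriv γ t⟫) • deriv γ t
            - (‖deriv γ t‖ ^ 2) • α t = 0 ∧
        deriv α t - ⟪α t, deriv γ t⟫ • α t + ((1 / 2) * ‖α t‖ ^ 2) • deriv γ t = 0) ↔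
    (∀ t ∈ Set.Ioo p q,
        deriv (deriv (deriv γ)) t
            - (3 * ⟪deriv γ t, deriv (deriv γ) t⟫ / ‖deriv γ t‖ ^ 2) • deriv (deriv γ) t
            + (3 * ‖deriv (deriv γ) t‖ ^ 2 / (2 * ‖deriv γ t‖ ^ 2)) • deriv γ t = 0) := by
  set α₀ := fun t => inversionDeriv (deriv γ t) (deriv (deriv γ) t)
  have hγ' : ContDiffOn ℝ 2 (deriv γ) (Set.Ioo p q) := hγ.deriv_of_isOpen isOpen_Ioo (by norm_num)
  have hγ'' : ContDiffOn ℝ 1 (deriv (deriv γ)) (Set.Ioo p q) :=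
    hγ'.deriv_of_isOpen isOpen_Ioo (by norm_num)
  have hasDerivAt_of_contDiffOn {f : ℝ → EuclideanSpace ℝ (Fin n)} {k : WithTop ℕ∞}
      (hf : ContDiffOn ℝ k f (Set.Ioo p q)) (hk : k ≠ 0) {t} (ht : t ∈ Set.Ioo p q) :
      HasDerivAt f (deriv f t) t :=
    ((hf.differentiableOn hk).differentiableAt (isOpen_Ioo.mem_nhds ht)).hasDerivAt
  have hα₀ : ∀ t ∈ Set.Ioo p q, HasDerivAt α₀ _ t := fun t ht =>
    hasDerivAt_inversionDeriv (hasDerivAt_of_contDiffOn hγ' (by norm_num) ht)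
      (hasDerivAt_of_contDiffOn hγ'' (by norm_num) ht) (hne t ht)
  constructor
  · rintro ⟨α, -, hα⟩ t ht
    have hαα₀ : α =ᶠ[nhds t] α₀ := by
      filter_upwards [isOpen_Ioo.mem_nhds ht] with s hs
      exact (eq_inversionDeriv_iff (hne s hs)).2 (hα s hs).1
    have h2 := (hα t ht).2
    rw [hαα₀.deriv_eq, (hα₀ t ht).deriv, hαα₀.eq_of_nhds] at h2
    simp only [α₀, conformalJerk] at h2
    refine (inversionDeriv_eq_zero_iff (hne t ht)).1 ?_
    linear_combination (norm := module) h2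
  · intro hODE
    refine ⟨α₀, (hγ'.of_le (by norm_num)).inversionDeriv hγ'' hne, fun t ht => ⟨?_, ?_⟩⟩
    · exact (eq_inversionDeriv_iff (hne t ht)).1 rfl
    · rw [(hα₀ t ht).deriv, conformalJerk, hODE t ht, inversionDeriv_zero_right]
      module
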